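/- Let p be an odd prime and C = ⟨u ā(x)⟩ a skew cyclic code of length n over R = F_p[u]/(u^2), where ā(x) ∈ F_p[x] is monic of degree r and ā(x) divides x^n − 1 in F_p[x]. Then the set β = { u ā(x), x·u ā(x), ..., x^{n−r−1}·u ā(x) } is a minimal generating set for C over F_p, and |C| = p^{n−r}. -/

import Mathlib

open TrivSqZeroExt

theorem RingAut.one_apply' {R : Type*} [Ring R] (b : R) : (1 : RingAut R) b = b := rfl

/-- The skew polynomial ring `R[x;θ]`, as finitely supported coefficient
sequences with multiplication twisted by the ring automorphism `θ`:
`(a x^i) * (b x^j) = a θ^i(b) x^{i+j}`. -/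
def SkewPoly (R : Type*) [Ring R] (θ : RingAut R) : Type _ := ℕ →₀ R

namespace SkewPoly

variable {R : Type*} [Ring R] (θ : RingAut R)

/-- The skew-twisted convolution product. -/
noncomputable def mulAux (f g : ℕ →₀ R) : ℕ →₀ R :=
  f.sum fun i a => g.sum fun j b => Finsupp.single (i + j) (a * (θ ^ i) b)

theorem mulAux_zero_left (g : ℕ →₀ R) : mulAux θ 0 g = 0 := Finsupp.sum_zero_index

theorem mulAux_zero_right (f : ℕ →₀ R) : mulAux θ f 0 = 0 := by
  simp [mulAux, Finsupp.sum_zero_index]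

theorem mulAux_add_left (f f' g : ℕ →₀ R) :
    mulAux θ (f + f') g = mulAux θ f g + mulAux θ f' g := by
  unfold mulAux
  apply Finsupp.sum_add_index' <;> intros <;> simp [add_mul, Finsupp.single_add, Finsupp.sum_add]

theorem mulAux_add_right (f g g' : ℕ →₀ R) :
    mulAux θ f (g + g') = mulAux θ f g + mulAux θ f g' := by
  unfold mulAux
  rw [← Finsupp.sum_add]
  apply Finsupp.sum_congr
  intro i _
  apply Finsupp.sum_add_index' <;> intros <;> simp [mul_add, Finsupp.single_add]

theorem one_mulAux (g : ℕ →₀ R) : mulAux θ (Finsupp.single 0 1) g = g := by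
  unfold mulAux
  rw [Finsupp.sum_single_index]
  · simp [RingAut.one_apply', Finsupp.sum_single]
  · simp

theorem mulAux_one (f : ℕ →₀ R) : mulAux θ f (Finsupp.single 0 1) = f := by
  unfold mulAux
  have : ∀ i ∈ f.support, ((Finsupp.single 0 1 : ℕ →₀ R).sum fun j b =>
      Finsupp.single (i + j) (f i * (θ ^ i) b)) = Finsupp.single i (f i) := by
    intro i _
    rw [Finsupp.sum_single_index] <;> simp
  rw [Finsupp.sum_congr this, Finsupp.sum_single f]

theorem mulAux_single_single (i j : ℕ) (a b : R) :
    mulAux θ (Finsupp.single i a) (Finsupp.single j b) =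
      Finsupp.single (i + j) (a * (θ ^ i) b) := by
  unfold mulAux
  rw [Finsupp.sum_single_index, Finsupp.sum_single_index]
  · simp
  · rw [Finsupp.sum_single_index] <;> simp

theorem mulAux_assoc (f g h : ℕ →₀ R) :
    mulAux θ (mulAux θ f g) h = mulAux θ f (mulAux θ g h) := by
  induction f using Finsupp.induction_linear with
  | zero => simp [mulAux_zero_left]
  | add f f' hf hf' => simp [mulAux_add_left, hf, hf']
  | single i a =>
    induction g using Finsupp.induction_linear with
    | zero => simp [mulAux_zero_left, mulAux_zero_right]
    | add g g' hg hg' => simp [mulAux_add_left, mulAux_add_right, hg, hg']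
    | single j b =>
      induction h using Finsupp.induction_linear with
      | zero => simp [mulAux_zero_right]
      | add h h' hh hh' => simp [mulAux_add_right, hh, hh']
      | single k c =>
        rw [mulAux_single_single, mulAux_single_single, mulAux_single_single,
          mulAux_single_single]
        rw [add_assoc, mul_assoc, map_mul, pow_add]
        rfl

variable {θ}

noncomputable instance : AddCommGroup (SkewPoly R θ) := inferInstanceAs (AddCommGroup (ℕ →₀ R))

/-- Reinterpret a skew polynomial as a finitely supported function. -/
def toFinsupp (f : SkewPoly R θ) : ℕ →₀ R := f

/-- Build a skew polynomial out of a finitely supported function. -/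
def ofFinsupp (f : ℕ →₀ R) : SkewPoly R θ := f

noncomputable instance : Ring (SkewPoly R θ) where
  __ := (inferInstance : AddCommGroup (SkewPoly R θ))
  mul f g := mulAux θ (toFinsupp f) (toFinsupp g)
  one := Finsupp.single 0 1
  left_distrib f g h := mulAux_add_right θ (toFinsupp f) (toFinsupp g) (toFinsupp h)
  right_distrib f g h := mulAux_add_left θ (toFinsupp f) (toFinsupp g) (toFinsupp h)
  zero_mul := mulAux_zero_left θ
  mul_zero := mulAux_zero_right θ
  mul_assoc := mulAux_assoc θ
  one_mul := one_mulAux θ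
  mul_one := mulAux_one θ

variable (θ) in
/-- The constant skew polynomial `a`. -/
noncomputable def C (a : R) : SkewPoly R θ := ofFinsupp (Finsupp.single 0 a)

variable (θ) in
/-- The variable `x` of the skew polynomial ring. -/
noncomputable def X : SkewPoly R θ := ofFinsupp (Finsupp.single 1 1)

/-- The `n`-th coefficient of a skew polynomial. -/
def coeff (f : SkewPoly R θ) (n : ℕ) : R := toFinsupp f n

/-- The degree of a skew polynomial (`⊥` for the zero polynomial). -/
def degree (f : SkewPoly R θ) : WithBot ℕ := (toFinsupp f).support.max

/-- The degree of a skew polynomial as a natural number. -/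
def natDegree (f : SkewPoly R θ) : ℕ := WithBot.unbotD 0 (degree f)

/-- The leading coefficient of a skew polynomial. -/
def leadingCoeff (f : SkewPoly R θ) : R := coeff f (natDegree f)

/-- A skew polynomial is monic if its leading coefficient is `1`. -/
def Monic (f : SkewPoly R θ) : Prop := leadingCoeff f = 1

end SkewPoly

/-- The inclusion of `F_p[x]` into the skew polynomial ring
`(F_p + u F_p)[x;θ]` (coefficientwise `a ↦ a + u·0`); this is the natural
embedding of `F_p[x]` as a subring of `R[x;θ]` since `θ` fixes `F_p`. -/
noncomputable def SkewPoly.ofPoly {p : ℕ}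
    (θ : RingAut (DualNumber (ZMod p))) (f : Polynomial (ZMod p)) :
    SkewPoly (DualNumber (ZMod p)) θ :=
  SkewPoly.ofFinsupp
    (Finsupp.mapRange (inl : ZMod p → DualNumber (ZMod p)) (inl_zero (ZMod p)) f.toFinsupp.coeff)

/-- Reduction of a skew polynomial over `F_p + u F_p` modulo `u`, i.e. the
polynomial in `F_p[x]` whose coefficients are the first components of the
coefficients. -/
noncomputable def SkewPoly.fstPoly {p : ℕ}
    {θ : RingAut (DualNumber (ZMod p))} (f : SkewPoly (DualNumber (ZMod p)) θ) :
    Polynomial (ZMod p) :=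
  Polynomial.ofFinsupp (AddMonoidAlgebra.ofCoeff
    (Finsupp.mapRange TrivSqZeroExt.fst fst_zero (SkewPoly.toFinsupp f)))

/-!
Every automorphism `θ` of `F_p[u]` fixes `F_p` and sends `u` to `t u` with `t ≠ 0`, so
`x^i · u g(x) = u · t^i x^i g(x)`. Hence the left submodule generated by `u ā` consists of the
classes of `u g ā` with `g ∈ F_p[x]`, and `∑ cᵢ xⁱ · u ā = u (∑ cᵢ tⁱ xⁱ) ā`. Moreover `u g` lies
in the left ideal generated by `xⁿ - 1` iff `xⁿ - 1 ∣ g` in `F_p[x]`. Since `ā ∣ xⁿ - 1`, reducing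
`g ā` modulo `xⁿ - 1` gives `q ā` with `deg q < n - r`, and a degree count shows that such a
`q` is unique; as `t ≠ 0`, the coefficients `cᵢ tⁱ` of `q` determine the `cᵢ`.
-/

open Polynomial

namespace Polynomial

variable {R : Type*} [CommRing R] [IsDomain R] {m a : R[X]}

theorem eq_zero_of_dvd_mul_of_mem_degreeLT {q : R[X]} (ha : a ≠ 0)
    (hq : q ∈ degreeLT R (m.natDegree - a.natDegree)) (h : m ∣ q * a) : q = 0 := by
  by_contra hq0
  have hle := natDegree_le_of_dvd h (mul_ne_zero hq0 ha)
  rw [natDegree_mul hq0 ha] at hle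
  rw [mem_degreeLT, ← natDegree_lt_iff_degree_lt hq0] at hq
  omega

theorem exists_mem_degreeLT_dvd_sub_mul (hm : m.Monic) (hdvd : a ∣ m) (g : R[X]) :
    ∃ q ∈ degreeLT R (m.natDegree - a.natDegree), m ∣ (g - q) * a := by
  have ha : a ≠ 0 := by rintro rfl; exact hm.ne_zero (zero_dvd_iff.mp hdvd)
  obtain ⟨q, hq⟩ : a ∣ g * a %ₘ m := by
    rw [modByMonic_eq_sub_mul_div]
    exact dvd_sub (dvd_mul_left a g) (hdvd.mul_right _)
  refine ⟨q, ?_, ⟨g * a /ₘ m, ?_⟩⟩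
  · rcases eq_or_ne q 0 with rfl | hq0
    · exact zero_mem _
    have hlt := degree_modByMonic_lt (g * a) hm
    rw [hq, degree_eq_natDegree (mul_ne_zero ha hq0), degree_eq_natDegree hm.ne_zero,
      Nat.cast_lt, natDegree_mul ha hq0] at hlt
    rw [mem_degreeLT, ← natDegree_lt_iff_degree_lt hq0]
    omega
  · rw [sub_mul, mul_comm q, ← hq, modByMonic_eq_sub_mul_div, sub_sub_cancel]

theorem exists_eq_mul_iff_existsUnique_degreeLT {Q : Type*} (Φ : R[X] → Q)
    (hΦ : ∀ g h, Φ g = Φ h ↔ m ∣ g - h) (hm : m.Monic) (hdvd : a ∣ m) (x : Q) :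
    (∃ g, x = Φ (g * a)) ↔ ∃! q : degreeLT R (m.natDegree - a.natDegree), x = Φ (q * a) := by
  have ha : a ≠ 0 := by rintro rfl; exact hm.ne_zero (zero_dvd_iff.mp hdvd)
  constructor
  · rintro ⟨g, rfl⟩
    obtain ⟨q, hq, hgq⟩ := exists_mem_degreeLT_dvd_sub_mul hm hdvd g
    refine ⟨⟨q, hq⟩, (hΦ _ _).mpr (by rwa [← sub_mul]), fun q' hq' => ?_⟩
    dsimp only at hq'
    rw [hΦ, ← sub_mul] at hq'
    have hdiff : m ∣ (q - q') * a := by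
      simpa [sub_mul] using dvd_sub hq' hgq
    have := eq_zero_of_dvd_mul_of_mem_degreeLT ha (sub_mem hq q'.2) hdiff
    exact Subtype.ext (sub_eq_zero.mp this).symm
  · rintro ⟨q, hq, -⟩
    exact ⟨q, hq⟩

theorem existsUnique_degreeLT_iff_existsUnique_coeff {K : Type*} [Field K] {t : K} (ht : t ≠ 0)
    (k : ℕ) (P : K[X] → Prop) :
    (∃! q : degreeLT K k, P q) ↔
      ∃! c : Fin k → K, P (∑ i : Fin k, monomial i (c i * t ^ (i : ℕ))) :=
  ((Equiv.piCongrRight fun i : Fin k => Equiv.mulRight₀ (t ^ (i : ℕ)) (pow_ne_zero _ ht)).trans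
    (degreeLTEquiv K k).symm.toEquiv).existsUnique_congr_right.symm

end Polynomial

theorem Nat.card_eq_of_forall_existsUnique_eq {α ι : Type*} {S : Set α} {F : ι → α}
    (hF : ∀ i, F i ∈ S) (h : ∀ x ∈ S, ∃! i, x = F i) : Nat.card S = Nat.card ι := by
  refine (Nat.card_congr (Equiv.ofBijective (fun i => ⟨F i, hF i⟩) ⟨fun i j hij => ?_, ?_⟩)).symm
  · exact (h _ (hF j)).unique (congrArg Subtype.val hij).symm rfl
  · rintro ⟨x, hx⟩
    obtain ⟨i, rfl, -⟩ := h x hx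
    exact ⟨i, rfl⟩

namespace RingAut

open TrivSqZeroExt DualNumber

theorem map_inl_zmod {n : ℕ} (σ : RingAut (DualNumber (ZMod n))) (s : ZMod n) :
    σ (inl s) = inl s :=
  RingHom.congr_fun (RingHom.ext_zmod (σ.toRingHom.comp (inlHom _ _)) (inlHom _ _)) s

variable {K : Type*} [CommRing K]

theorem map_eps_eq_inr [NoZeroDivisors K] (σ : RingAut (DualNumber K)) :
    σ ε = inr (σ ε).snd := by
  have hsq : σ ε * σ ε = 0 := by rw [← map_mul, eps_mul_eps, map_zero]
  have hfst : (σ ε).fst = 0 := by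
    simpa using congrArg fst hsq
  conv_lhs => rw [← inl_fst_add_inr_snd_eq (σ ε), hfst, inl_zero, zero_add]

theorem snd_map_eps_ne_zero [NoZeroDivisors K] [Nontrivial K] (σ : RingAut (DualNumber K)) :
    (σ ε).snd ≠ 0 := by
  intro h
  have : σ ε = σ 0 := by rw [map_eps_eq_inr, h, inr_zero, map_zero]
  simpa using congrArg snd (σ.injective this)

variable {p : ℕ} [Fact p.Prime]

theorem map_inr_zmod (σ : RingAut (DualNumber (ZMod p))) (s : ZMod p) :
    σ (inr s) = inr (s * (σ ε).snd) := by
  have : (inr s : DualNumber (ZMod p)) = inl s * ε := by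
    rw [eps, inl_mul_inr, smul_eq_mul, mul_one]
  rw [this, map_mul, map_inl_zmod, map_eps_eq_inr, inl_mul_inr, smul_eq_mul, snd_inr]

theorem snd_pow_apply_eps (σ : RingAut (DualNumber (ZMod p))) (i : ℕ) :
    ((σ ^ i) ε).snd = (σ ε).snd ^ i := by
  induction i with
  | zero => simp
  | succ i ih =>
    rw [pow_succ, RingAut.mul_apply, map_eps_eq_inr σ, map_inr_zmod, snd_inr, snd_inr, ih,
      pow_succ']

theorem pow_apply_inr (σ : RingAut (DualNumber (ZMod p))) (i : ℕ) (s : ZMod p) :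
    (σ ^ i) (inr s) = inr (s * (σ ε).snd ^ i) := by
  rw [map_inr_zmod, snd_pow_apply_eps]

end RingAut

namespace SkewPoly

open TrivSqZeroExt DualNumber

section Ring

variable {R : Type*} [Ring R] {θ : RingAut R}

@[ext]
theorem ext {f g : SkewPoly R θ} (h : ∀ k, f.coeff k = g.coeff k) : f = g :=
  Finsupp.ext h

@[simp]
theorem coeff_add (f g : SkewPoly R θ) (k : ℕ) : (f + g).coeff k = f.coeff k + g.coeff k := rfl

@[simp]
theorem coeff_sub (f g : SkewPoly R θ) (k : ℕ) :
    (f - g).coeff k = f.coeff k - g.coeff k := rfl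

theorem ofFinsupp_single_mul_single (i j : ℕ) (a b : R) :
    (ofFinsupp (Finsupp.single i a) : SkewPoly R θ) * ofFinsupp (Finsupp.single j b) =
      ofFinsupp (Finsupp.single (i + j) (a * (θ ^ i) b)) :=
  mulAux_single_single θ i j a b

theorem C_mul_X_pow (a : R) (k : ℕ) :
    C θ a * X θ ^ k = ofFinsupp (Finsupp.single k a) := by
  induction k with
  | zero => rw [pow_zero, mul_one]; rfl
  | succ k ih =>
    rw [pow_succ, ← mul_assoc, ih, X, ofFinsupp_single_mul_single]
    simp

theorem X_pow (k : ℕ) : X θ ^ k = ofFinsupp (Finsupp.single k (1 : R)) := by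
  rw [← C_mul_X_pow, show C θ (1 : R) = 1 from rfl, one_mul]

@[elab_as_elim]
theorem induction_on {P : SkewPoly R θ → Prop} (f : SkewPoly R θ) (zero : P 0)
    (add : ∀ f g, P f → P g → P (f + g))
    (single : ∀ i a, P (ofFinsupp (Finsupp.single i a))) : P f :=
  Finsupp.induction_linear (motive := P) (toFinsupp f) zero add single

end Ring

section DualNumber

variable {p : ℕ} (θ : RingAut (DualNumber (ZMod p)))

/-- The polynomial `u·g(x)`. -/
noncomputable def ofPolyEps : (ZMod p)[X] →+ SkewPoly (DualNumber (ZMod p)) θ where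
  toFun g := ofFinsupp (Finsupp.mapRange inr (inr_zero (ZMod p)) g.toFinsupp.coeff)
  map_zero' := rfl
  map_add' g h := by ext1 k; exact inr_add _ (g.coeff k) (h.coeff k)

variable {θ}

noncomputable def sndPoly : SkewPoly (DualNumber (ZMod p)) θ →+ (ZMod p)[X] where
  toFun f := Polynomial.ofFinsupp (AddMonoidAlgebra.ofCoeff
    (Finsupp.mapRange snd snd_zero (toFinsupp f)))
  map_zero' := rfl
  map_add' f g := by ext k; exact snd_add (f.coeff k) (g.coeff k)

@[simp]
theorem coeff_ofPoly (g : (ZMod p)[X]) (k : ℕ) : (ofPoly θ g).coeff k = inl (g.coeff k) := rfl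

@[simp]
theorem coeff_ofPolyEps (g : (ZMod p)[X]) (k : ℕ) :
    (ofPolyEps θ g).coeff k = inr (g.coeff k) := rfl

@[simp]
theorem coeff_fstPoly (f : SkewPoly (DualNumber (ZMod p)) θ) (k : ℕ) :
    (fstPoly f).coeff k = (f.coeff k).fst := rfl

@[simp]
theorem coeff_sndPoly (f : SkewPoly (DualNumber (ZMod p)) θ) (k : ℕ) :
    (sndPoly f).coeff k = (f.coeff k).snd := rfl

@[simp]
theorem coeff_ofFinsupp_single (i k : ℕ) (a : DualNumber (ZMod p)) :
    (ofFinsupp (Finsupp.single i a) : SkewPoly (DualNumber (ZMod p)) θ).coeff k =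
      Finsupp.single i a k := rfl

theorem ofPoly_add (g h : (ZMod p)[X]) : ofPoly θ (g + h) = ofPoly θ g + ofPoly θ h := by
  ext1 k; simp

theorem ofPoly_sub (g h : (ZMod p)[X]) : ofPoly θ (g - h) = ofPoly θ g - ofPoly θ h := by
  ext1 k; simp

theorem ofPoly_monomial (j : ℕ) (b : ZMod p) :
    ofPoly θ (monomial j b) = ofFinsupp (Finsupp.single j (inl b)) := by
  ext1 k; simp [coeff_monomial, Finsupp.single_apply, apply_ite inl]

theorem ofPolyEps_monomial (j : ℕ) (b : ZMod p) :
    ofPolyEps θ (monomial j b) = ofFinsupp (Finsupp.single j (inr b)) := by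
  ext1 k; simp [coeff_monomial, Finsupp.single_apply]

@[simp]
theorem fstPoly_zero : fstPoly (0 : SkewPoly (DualNumber (ZMod p)) θ) = 0 := rfl

theorem fstPoly_add (f g : SkewPoly (DualNumber (ZMod p)) θ) :
    fstPoly (f + g) = fstPoly f + fstPoly g := by
  ext k; simp

theorem fstPoly_single (i : ℕ) (a : DualNumber (ZMod p)) :
    fstPoly (ofFinsupp (Finsupp.single i a) : SkewPoly (DualNumber (ZMod p)) θ) =
      monomial i a.fst := by
  ext k; simp [coeff_monomial, Finsupp.single_apply, apply_ite fst]

@[simp]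
theorem fstPoly_ofPoly (g : (ZMod p)[X]) : fstPoly (ofPoly θ g) = g := by
  ext k; simp

@[simp]
theorem sndPoly_ofPolyEps (g : (ZMod p)[X]) : sndPoly (ofPolyEps θ g) = g := by
  ext k; simp

theorem sndPoly_single (i : ℕ) (a : DualNumber (ZMod p)) :
    sndPoly (ofFinsupp (Finsupp.single i a) : SkewPoly (DualNumber (ZMod p)) θ) =
      monomial i a.snd := by
  ext k; simp [coeff_monomial, Finsupp.single_apply, apply_ite snd]

end DualNumber

section Prime

variable {p : ℕ} [Fact p.Prime] {θ : RingAut (DualNumber (ZMod p))}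

theorem single_mul_ofPolyEps (i : ℕ) (a : DualNumber (ZMod p)) (h : (ZMod p)[X]) :
    (ofFinsupp (Finsupp.single i a) : SkewPoly (DualNumber (ZMod p)) θ) * ofPolyEps θ h =
      ofPolyEps θ (monomial i (a.fst * (θ ε).snd ^ i) * h) := by
  induction h using Polynomial.induction_on' with
  | add g h hg hh => rw [map_add, mul_add, hg, hh, mul_add, map_add]
  | monomial j b =>
    rw [ofPolyEps_monomial, ofFinsupp_single_mul_single, RingAut.pow_apply_inr,
      monomial_mul_monomial, ofPolyEps_monomial]
    congr 2
    ext <;> simp [mul_comm, mul_left_comm]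

theorem mul_ofPolyEps (f : SkewPoly (DualNumber (ZMod p)) θ) (h : (ZMod p)[X]) :
    f * ofPolyEps θ h =
      ofPolyEps θ ((fstPoly f).comp (Polynomial.C (θ ε).snd * Polynomial.X) * h) := by
  induction f using SkewPoly.induction_on with
  | zero => simp
  | add f g hf hg => rw [add_mul, hf, hg, fstPoly_add, add_comp, add_mul, map_add]
  | single i a =>
    rw [single_mul_ofPolyEps, fstPoly_single, monomial_comp, mul_pow, ← C_pow, ← mul_assoc,
      ← C_mul, C_mul_X_pow_eq_monomial]

theorem ofPolyEps_mul_ofPoly (q g : (ZMod p)[X]) :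
    ofPolyEps θ q * ofPoly θ g = ofPolyEps θ (q * g) := by
  induction q using Polynomial.induction_on' with
  | add q q' hq hq' => rw [map_add, add_mul, hq, hq', add_mul, map_add]
  | monomial i s =>
    induction g using Polynomial.induction_on' with
    | add g g' hg hg' => rw [ofPoly_add, mul_add, hg, hg', mul_add, map_add]
    | monomial j b =>
      rw [ofPolyEps_monomial, ofPoly_monomial, ofFinsupp_single_mul_single,
        RingAut.map_inl_zmod, inr_mul_inl, op_smul_eq_mul, monomial_mul_monomial,
        ofPolyEps_monomial]

theorem sndPoly_mul_ofPoly (f : SkewPoly (DualNumber (ZMod p)) θ) (g : (ZMod p)[X]) :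
    sndPoly (f * ofPoly θ g) = sndPoly f * g := by
  induction f using SkewPoly.induction_on with
  | zero => simp
  | add f f' hf hf' => rw [add_mul, map_add, hf, hf', map_add, add_mul]
  | single i a =>
    induction g using Polynomial.induction_on' with
    | add g g' hg hg' => rw [ofPoly_add, mul_add, map_add, hg, hg', mul_add]
    | monomial j b =>
      rw [ofPoly_monomial, ofFinsupp_single_mul_single, RingAut.map_inl_zmod, sndPoly_single,
        sndPoly_single, monomial_mul_monomial]
      simp

theorem ofPoly_X_pow_sub_one (n : ℕ) :
    ofPoly θ (Polynomial.X ^ n - 1 : (ZMod p)[X]) = X θ ^ n - 1 := by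
  rw [ofPoly_sub, X_pow_eq_monomial, ← monomial_zero_one, ofPoly_monomial, ofPoly_monomial,
    inl_one, X_pow]
  rfl

theorem ofPolyEps_mem_span_X_pow_sub_one_iff (n : ℕ) (g : (ZMod p)[X]) :
    ofPolyEps θ g ∈ Ideal.span {X θ ^ n - 1} ↔ (Polynomial.X ^ n - 1 : (ZMod p)[X]) ∣ g := by
  rw [← ofPoly_X_pow_sub_one, Ideal.mem_span_singleton']
  constructor
  · rintro ⟨f, hf⟩
    exact ⟨sndPoly f, by rw [mul_comm, ← sndPoly_mul_ofPoly, hf, sndPoly_ofPolyEps]⟩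
  · rintro ⟨q, rfl⟩
    exact ⟨ofPolyEps θ q, by rw [ofPolyEps_mul_ofPoly, mul_comm]⟩

theorem mkQ_ofPolyEps_eq_iff (n : ℕ) (g h : (ZMod p)[X]) :
    (Ideal.span {X θ ^ n - 1}).mkQ (ofPolyEps θ g) =
        (Ideal.span {X θ ^ n - 1}).mkQ (ofPolyEps θ h) ↔
      (Polynomial.X ^ n - 1 : (ZMod p)[X]) ∣ g - h := by
  rw [Submodule.mkQ_apply, Submodule.mkQ_apply, Submodule.Quotient.eq, ← map_sub,
    ofPolyEps_mem_span_X_pow_sub_one_iff]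

theorem C_eps_mul_ofPoly (a : (ZMod p)[X]) : C θ ε * ofPoly θ a = ofPolyEps θ a := by
  have : C θ ε = ofPolyEps θ 1 := by
    rw [← monomial_zero_one, ofPolyEps_monomial]
    rfl
  rw [this, ofPolyEps_mul_ofPoly, one_mul]

theorem mem_span_mkQ_ofPolyEps_iff (I : Ideal (SkewPoly (DualNumber (ZMod p)) θ))
    (a : (ZMod p)[X]) (x : SkewPoly (DualNumber (ZMod p)) θ ⧸ I) :
    x ∈ Submodule.span (SkewPoly (DualNumber (ZMod p)) θ) {I.mkQ (ofPolyEps θ a)} ↔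
      ∃ g, x = I.mkQ (ofPolyEps θ (g * a)) := by
  set t := (θ ε).snd
  have ht : t ≠ 0 := RingAut.snd_map_eps_ne_zero θ
  rw [Submodule.mem_span_singleton]
  constructor
  · rintro ⟨f, rfl⟩
    refine ⟨(fstPoly f).comp (Polynomial.C t * Polynomial.X), ?_⟩
    rw [← map_smul, smul_eq_mul, mul_ofPolyEps]
  · rintro ⟨g, rfl⟩
    refine ⟨ofPoly θ (g.comp (Polynomial.C t⁻¹ * Polynomial.X)), ?_⟩
    have huntwist : (g.comp (Polynomial.C t⁻¹ * Polynomial.X)).comp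
        (Polynomial.C t * Polynomial.X) = g := by
      rw [comp_assoc, mul_comp, C_comp, X_comp, ← mul_assoc, ← Polynomial.C_mul,
        inv_mul_cancel₀ ht, Polynomial.C_1, one_mul, comp_X]
    rw [← map_smul, smul_eq_mul, mul_ofPolyEps, fstPoly_ofPoly, huntwist]

theorem sum_C_inl_mul_X_pow_mul_ofPolyEps {k : ℕ} (c : Fin k → ZMod p) (a : (ZMod p)[X]) :
    ∑ i : Fin k, C θ (inl (c i)) * X θ ^ (i : ℕ) * ofPolyEps θ a =
      ofPolyEps θ ((∑ i : Fin k, monomial i (c i * (θ ε).snd ^ (i : ℕ))) * a) := by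
  rw [Finset.sum_mul, map_sum]
  refine Finset.sum_congr rfl fun i _ => ?_
  rw [C_mul_X_pow, single_mul_ofPolyEps, fst_inl]

end Prime

end SkewPoly

open SkewPoly DualNumber in
theorem skew_code_u_generating_set_general (p : ℕ) (hp : p.Prime)
    (θ : RingAut (DualNumber (ZMod p))) (n : ℕ) (hn : 0 < n)
    (abar : Polynomial (ZMod p)) (r : ℕ)
    (hr : abar.natDegree = r)
    (hdvd : abar ∣ (Polynomial.X ^ n - 1 : Polynomial (ZMod p)))
    (Code : Submodule (SkewPoly (DualNumber (ZMod p)) θ)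
      (SkewPoly (DualNumber (ZMod p)) θ ⧸ Ideal.span {SkewPoly.X θ ^ n - 1}))
    (hCode : Code = Submodule.span (SkewPoly (DualNumber (ZMod p)) θ)
      {(Ideal.span {SkewPoly.X θ ^ n - 1}).mkQ (SkewPoly.C θ ε * SkewPoly.ofPoly θ abar)}) :
    (∀ x : SkewPoly (DualNumber (ZMod p)) θ ⧸ Ideal.span {SkewPoly.X θ ^ n - 1},
      x ∈ Code ↔ ∃! c : Fin (n - r) → ZMod p,
        x = (Ideal.span {SkewPoly.X θ ^ n - 1}).mkQ
          (∑ i : Fin (n - r), SkewPoly.C θ (TrivSqZeroExt.inl (c i)) *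
            SkewPoly.X θ ^ (i : ℕ) * (SkewPoly.C θ ε * SkewPoly.ofPoly θ abar))) ∧
    Nat.card Code = p ^ (n - r) := by
  have : Fact p.Prime := ⟨hp⟩
  have hm : (Polynomial.X ^ n - 1 : (ZMod p)[X]).Monic := by
    simpa using monic_X_pow_sub_C (1 : ZMod p) hn.ne'
  have hk : (Polynomial.X ^ n - 1 : (ZMod p)[X]).natDegree - abar.natDegree = n - r := by
    rw [← Polynomial.C_1, natDegree_X_pow_sub_C, hr]
  have hmem : ∀ x, x ∈ Code ↔
      ∃ g, x = (Ideal.span {X θ ^ n - 1}).mkQ (ofPolyEps θ (g * abar)) := by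
    intro x
    rw [hCode, C_eps_mul_ofPoly, mem_span_mkQ_ofPolyEps_iff]
  have hsum : ∀ c : Fin (n - r) → ZMod p,
      ∑ i : Fin (n - r), C θ (inl (c i)) * X θ ^ (i : ℕ) * (C θ ε * ofPoly θ abar) =
        ofPolyEps θ ((∑ i : Fin (n - r), monomial i (c i * (θ ε).snd ^ (i : ℕ))) * abar) :=
    fun c => by rw [C_eps_mul_ofPoly, sum_C_inl_mul_X_pow_mul_ofPolyEps]
  have hrep : ∀ x, x ∈ Code ↔ ∃! c : Fin (n - r) → ZMod p,
      x = (Ideal.span {X θ ^ n - 1}).mkQ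
        (∑ i : Fin (n - r), C θ (inl (c i)) * X θ ^ (i : ℕ) *
          (C θ ε * ofPoly θ abar)) := by
    intro x
    rw [hmem, exists_eq_mul_iff_existsUnique_degreeLT _ (mkQ_ofPolyEps_eq_iff n) hm hdvd, hk]
    simp only [hsum]
    exact existsUnique_degreeLT_iff_existsUnique_coeff (RingAut.snd_map_eps_ne_zero θ) _
      fun q => x = (Ideal.span {X θ ^ n - 1}).mkQ (ofPolyEps θ (q * abar))
  refine ⟨hrep, ?_⟩
  rw [← SetLike.coe_sort_coe, Nat.card_eq_of_forall_existsUnique_eq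
    (fun c => (hmem _).mpr ⟨_, congrArg _ (hsum c)⟩) fun x hx => (hrep x).mp hx]
  simp

open SkewPoly DualNumber in
/-- For the code `C = ⟨u ā(x)⟩` with `ā` monic of degree `r` dividing
`xⁿ - 1` in `F_p[x]`, the set `β = {u ā, x·u ā, …, x^{n-r-1}·u ā}` is a
minimal generating set over `F_p` (every codeword has a unique representation
as an `F_p`-combination of `β`), and `|C| = p^{n-r}`. -/
theorem skew_code_u_generating_set (p : ℕ) (hp : p.Prime) (hodd : p ≠ 2)
    (θ : RingAut (DualNumber (ZMod p))) (n : ℕ) (hn : 0 < n)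
    (abar : Polynomial (ZMod p)) (habar : abar.Monic) (r : ℕ)
    (hr : abar.natDegree = r) (hrn : r ≤ n)
    (hdvd : abar ∣ (Polynomial.X ^ n - 1 : Polynomial (ZMod p)))
    (Code : Submodule (SkewPoly (DualNumber (ZMod p)) θ)
      (SkewPoly (DualNumber (ZMod p)) θ ⧸ Ideal.span {SkewPoly.X θ ^ n - 1}))
    (hCode : Code = Submodule.span (SkewPoly (DualNumber (ZMod p)) θ)
      {(Ideal.span {SkewPoly.X θ ^ n - 1}).mkQ (SkewPoly.C θ ε * SkewPoly.ofPoly θ abar)}) :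
    (∀ x : SkewPoly (DualNumber (ZMod p)) θ ⧸ Ideal.span {SkewPoly.X θ ^ n - 1},
      x ∈ Code ↔ ∃! c : Fin (n - r) → ZMod p,
        x = (Ideal.span {SkewPoly.X θ ^ n - 1}).mkQ
          (∑ i : Fin (n - r), SkewPoly.C θ (TrivSqZeroExt.inl (c i)) *
            SkewPoly.X θ ^ (i : ℕ) * (SkewPoly.C θ ε * SkewPoly.ofPoly θ abar))) ∧
    Nat.card Code = p ^ (n - r) :=
  skew_code_u_generating_set_general p hp θ n hn abar r hr hdvd Code hCode
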